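/- If two rooted binary phylogenetic trees T1 and T2 on the same leaf set S (with |S| ≥ 3) have equal reflective triplet sets, i.e. R(T1) = R(T2), then T1 and T2 are isomorphic as leaf-labeled rooted trees. -/

import Mathlib

/-- A rooted binary phylogenetic tree with leaves labeled by `α`. -/
inductive PTree (α : Type) : Type
  | leaf : α → PTree α
  | node : PTree α → PTree α → PTree α

namespace PTree

variable {α : Type}

/-- The list of leaf labels of a tree. -/
def leafList : PTree α → List α
  | .leaf a => [a]
  | .node l r => l.leafList ++ r.leafList

/-- The leaves are distinctly labeled. -/
def distinctLeaves (T : PTree α) : Prop := T.leafList.Nodup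

/-- All root-paths (`false` = go left, `true` = go right) to leaves labeled `a`. -/
def pathsTo [DecidableEq α] : PTree α → α → List (List Bool)
  | .leaf b, a => if a = b then [[]] else []
  | .node l r, a =>
      (l.pathsTo a).map (List.cons false) ++ (r.pathsTo a).map (List.cons true)

/-- Longest common prefix of two root-paths: the LCA of the two nodes. -/
def lcp : List Bool → List Bool → List Bool
  | a :: as, b :: bs => if a = b then a :: lcp as bs else []
  | _, _ => []

/-- `v` is a proper descendant of `u`, nodes being identified with root-paths. -/
def ProperDesc (v u : List Bool) : Prop := u <+: v ∧ u ≠ v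

/-- The triplet `xy|z` is consistent with `T`: the LCA of `x` and `y` is a
proper descendant of the LCA of `x` and `z`. -/
def Consistent [DecidableEq α] (T : PTree α) (x y z : α) : Prop :=
  ∃ p ∈ T.pathsTo x, ∃ q ∈ T.pathsTo y, ∃ r ∈ T.pathsTo z,
    ProperDesc (lcp p q) (lcp p r)

/-- The reflective triplet set `R(T)` of `T`: all triplets consistent with `T`,
a triplet `xy|z` being encoded as the pair `(s(x,y), z)`. -/
def Rset [DecidableEq α] (T : PTree α) : Set (Sym2 α × α) :=
  {t | ∃ x y z, T.Consistent x y z ∧ t = (s(x, y), z)}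

/-- The closeness `C_{i,j}` of the pair `{i,j}` in a triplet set `R`:
the number of leaves `k` with `ij|k ∈ R`. -/
noncomputable def closeness (R : Set (Sym2 α × α)) (i j : α) : ℕ := {k | (s(i, j), k) ∈ R}.ncard

/-- `{i,j}` form a cherry of `T`: two leaves sharing the same parent. -/
def IsCherry [DecidableEq α] (T : PTree α) (i j : α) : Prop :=
  ∃ p b, (p ++ [b]) ∈ T.pathsTo i ∧ (p ++ [!b]) ∈ T.pathsTo j

end PTree

/-- Label-preserving isomorphism of rooted trees (children unordered). -/
inductive Iso {α : Type} : PTree α → PTree α → Prop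
  | leaf (a : α) : Iso (.leaf a) (.leaf a)
  | node {l r l' r' : PTree α} : Iso l l' → Iso r r' → Iso (.node l r) (.node l' r')
  | swap {l r l' r' : PTree α} : Iso l r' → Iso r l' → Iso (.node l r) (.node l' r')

set_option linter.unusedSectionVars false

namespace PTree

variable {α : Type} [DecidableEq α]

lemma leafList_ne_nil (T : PTree α) : T.leafList ≠ [] := by
  induction T with
  | leaf a => simp [leafList]
  | node l r ihl ihr => simp [leafList, ihl, ihr]

lemma mem_leafList_of_mem_pathsTo {T : PTree α} {a : α} {p : List Bool}
    (h : p ∈ T.pathsTo a) : a ∈ T.leafList := by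
  induction T generalizing p with
  | leaf b =>
    by_cases hab : a = b
    · simp [leafList, hab]
    · simp [pathsTo, hab] at h
  | node l r ihl ihr =>
    simp only [pathsTo, List.mem_append, List.mem_map] at h
    rcases h with ⟨q, hq, _⟩ | ⟨q, hq, _⟩
    · exact List.mem_append.mpr (Or.inl (ihl hq))
    · exact List.mem_append.mpr (Or.inr (ihr hq))

lemma exists_path {T : PTree α} {a : α} (h : a ∈ T.leafList) : ∃ p, p ∈ T.pathsTo a := by
  induction T with
  | leaf b =>
    simp [leafList] at h
    exact ⟨[], by simp [pathsTo, h]⟩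
  | node l r ihl ihr =>
    rcases List.mem_append.mp h with h | h
    · obtain ⟨p, hp⟩ := ihl h
      refine ⟨false :: p, ?_⟩
      simp only [pathsTo, List.mem_append, List.mem_map]
      exact Or.inl ⟨p, hp, rfl⟩
    · obtain ⟨p, hp⟩ := ihr h
      refine ⟨true :: p, ?_⟩
      simp only [pathsTo, List.mem_append, List.mem_map]
      exact Or.inr ⟨p, hp, rfl⟩

lemma pathsTo_eq_nil {T : PTree α} {a : α} (h : a ∉ T.leafList) : T.pathsTo a = [] := by
  cases hp : T.pathsTo a with
  | nil => rfl
  | cons p l => exact absurd (mem_leafList_of_mem_pathsTo (by rw [hp]; exact List.mem_cons_self)) h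

lemma mem_pathsTo_node {L R : PTree α} {a : α} {p : List Bool} :
    p ∈ (node L R).pathsTo a ↔
      (∃ p', p' ∈ L.pathsTo a ∧ p = false :: p') ∨ (∃ p', p' ∈ R.pathsTo a ∧ p = true :: p') := by
  simp only [pathsTo, List.mem_append, List.mem_map]
  constructor
  · rintro (⟨q, hq, rfl⟩ | ⟨q, hq, rfl⟩)
    · exact Or.inl ⟨q, hq, rfl⟩
    · exact Or.inr ⟨q, hq, rfl⟩
  · rintro (⟨q, hq, rfl⟩ | ⟨q, hq, rfl⟩)
    · exact Or.inl ⟨q, hq, rfl⟩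
    · exact Or.inr ⟨q, hq, rfl⟩

lemma lcp_cons (b : Bool) (p q : List Bool) : lcp (b :: p) (b :: q) = b :: lcp p q := by
  simp [lcp]

lemma lcp_cons_ne {a b : Bool} (h : a ≠ b) (p q : List Bool) : lcp (a :: p) (b :: q) = [] := by
  simp [lcp, h]

lemma head_eq_of_lcp_ne_nil {p q : List Bool} (h : lcp p q ≠ []) :
    ∃ b p' q', p = b :: p' ∧ q = b :: q' := by
  cases p with
  | nil => simp [lcp] at h
  | cons a as =>
    cases q with
    | nil => simp [lcp] at h
    | cons b bs =>
      by_cases hab : a = b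
      · exact ⟨a, as, bs, rfl, by rw [hab]⟩
      · simp [lcp, hab] at h

lemma properDesc_cons {b : Bool} {v u : List Bool} :
    ProperDesc (b :: v) (b :: u) ↔ ProperDesc v u := by
  simp [ProperDesc, List.cons_prefix_cons]

lemma pathsTo_node_left {L R : PTree α} {a : α} (h : a ∉ R.leafList) :
    (node L R).pathsTo a = (L.pathsTo a).map (List.cons false) := by
  simp [pathsTo, pathsTo_eq_nil h]

lemma pathsTo_node_right {L R : PTree α} {a : α} (h : a ∉ L.leafList) :
    (node L R).pathsTo a = (R.pathsTo a).map (List.cons true) := by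
  simp [pathsTo, pathsTo_eq_nil h]

/-- Symmetrized consistency. -/
def SCon (T : PTree α) (x y z : α) : Prop := T.Consistent x y z ∨ T.Consistent y x z

lemma mem_Rset {T : PTree α} {i j k : α} : (s(i, j), k) ∈ T.Rset ↔ SCon T i j k := by
  constructor
  · rintro ⟨x, y, z, hc, heq⟩
    rw [Prod.mk.injEq] at heq
    obtain ⟨h1, rfl⟩ := heq
    rcases Sym2.eq_iff.mp h1 with ⟨rfl, rfl⟩ | ⟨rfl, rfl⟩
    · exact Or.inl hc
    · exact Or.inr hc
  · rintro (h | h)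
    · exact ⟨i, j, k, h, rfl⟩
    · exact ⟨j, i, k, h, by rw [Sym2.eq_swap]⟩

lemma rset_eq_of_scon {A B : PTree α} (h : ∀ x y z, SCon A x y z ↔ SCon B x y z) :
    A.Rset = B.Rset := by
  have key : ∀ (A B : PTree α), (∀ x y z, SCon A x y z ↔ SCon B x y z) → A.Rset ⊆ B.Rset := by
    intro A B h t ht
    obtain ⟨x, y, z, hc, rfl⟩ := ht
    rcases (h x y z).mp (Or.inl hc) with h' | h'
    · exact ⟨x, y, z, h', rfl⟩
    · exact ⟨y, x, z, h', by rw [Sym2.eq_swap]⟩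
  exact le_antisymm (key A B h) (key B A fun x y z => (h x y z).symm)

lemma mem_of_consistent {T : PTree α} {x y z : α} (h : T.Consistent x y z) :
    x ∈ T.leafList ∧ y ∈ T.leafList ∧ z ∈ T.leafList := by
  obtain ⟨p, hp, q, hq, r, hr, _⟩ := h
  exact ⟨mem_leafList_of_mem_pathsTo hp, mem_leafList_of_mem_pathsTo hq,
    mem_leafList_of_mem_pathsTo hr⟩

lemma mem_of_scon {T : PTree α} {x y z : α} (h : SCon T x y z) :
    x ∈ T.leafList ∧ y ∈ T.leafList ∧ z ∈ T.leafList := by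
  rcases h with h | h
  · exact mem_of_consistent h
  · obtain ⟨h1, h2, h3⟩ := mem_of_consistent h
    exact ⟨h2, h1, h3⟩

lemma consistent_node_left {L R : PTree α} {x y z : α}
    (hx : x ∉ R.leafList) (hy : y ∉ R.leafList) (hz : z ∉ R.leafList) :
    (node L R).Consistent x y z ↔ L.Consistent x y z := by
  unfold Consistent
  rw [pathsTo_node_left hx, pathsTo_node_left hy, pathsTo_node_left hz]
  constructor
  · rintro ⟨p, hp, q, hq, r, hr, hd⟩
    simp only [List.mem_map] at hp hq hr
    obtain ⟨p', hp', rfl⟩ := hp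
    obtain ⟨q', hq', rfl⟩ := hq
    obtain ⟨r', hr', rfl⟩ := hr
    rw [lcp_cons, lcp_cons, properDesc_cons] at hd
    exact ⟨p', hp', q', hq', r', hr', hd⟩
  · rintro ⟨p, hp, q, hq, r, hr, hd⟩
    exact ⟨_, List.mem_map_of_mem hp, _, List.mem_map_of_mem hq, _,
      List.mem_map_of_mem hr, by rw [lcp_cons, lcp_cons, properDesc_cons]; exact hd⟩

lemma consistent_node_right {L R : PTree α} {x y z : α}
    (hx : x ∉ L.leafList) (hy : y ∉ L.leafList) (hz : z ∉ L.leafList) :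
    (node L R).Consistent x y z ↔ R.Consistent x y z := by
  unfold Consistent
  rw [pathsTo_node_right hx, pathsTo_node_right hy, pathsTo_node_right hz]
  constructor
  · rintro ⟨p, hp, q, hq, r, hr, hd⟩
    simp only [List.mem_map] at hp hq hr
    obtain ⟨p', hp', rfl⟩ := hp
    obtain ⟨q', hq', rfl⟩ := hq
    obtain ⟨r', hr', rfl⟩ := hr
    rw [lcp_cons, lcp_cons, properDesc_cons] at hd
    exact ⟨p', hp', q', hq', r', hr', hd⟩
  · rintro ⟨p, hp, q, hq, r, hr, hd⟩
    exact ⟨_, List.mem_map_of_mem hp, _, List.mem_map_of_mem hq, _,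
      List.mem_map_of_mem hr, by rw [lcp_cons, lcp_cons, properDesc_cons]; exact hd⟩

lemma scon_node_left {L R : PTree α} {x y z : α}
    (hx : x ∉ R.leafList) (hy : y ∉ R.leafList) (hz : z ∉ R.leafList) :
    SCon (node L R) x y z ↔ SCon L x y z :=
  or_congr (consistent_node_left hx hy hz) (consistent_node_left hy hx hz)

lemma scon_node_right {L R : PTree α} {x y z : α}
    (hx : x ∉ L.leafList) (hy : y ∉ L.leafList) (hz : z ∉ L.leafList) :
    SCon (node L R) x y z ↔ SCon R x y z :=
  or_congr (consistent_node_right hx hy hz) (consistent_node_right hy hx hz)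

lemma consistent_split {L R : PTree α} {x y z : α}
    (hx : x ∈ L.leafList) (hy : y ∈ L.leafList) (hz : z ∈ R.leafList) :
    (node L R).Consistent x y z := by
  obtain ⟨p, hp⟩ := exists_path hx
  obtain ⟨q, hq⟩ := exists_path hy
  obtain ⟨r, hr⟩ := exists_path hz
  refine ⟨false :: p, ?_, false :: q, ?_, true :: r, ?_, ?_⟩
  · exact mem_pathsTo_node.mpr (Or.inl ⟨p, hp, rfl⟩)
  · exact mem_pathsTo_node.mpr (Or.inl ⟨q, hq, rfl⟩)
  · exact mem_pathsTo_node.mpr (Or.inr ⟨r, hr, rfl⟩)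
  · rw [lcp_cons, lcp_cons_ne (by simp) p r]
    exact ⟨List.nil_prefix, by simp⟩

lemma consistent_split' {L R : PTree α} {x y z : α}
    (hx : x ∈ R.leafList) (hy : y ∈ R.leafList) (hz : z ∈ L.leafList) :
    (node L R).Consistent x y z := by
  obtain ⟨p, hp⟩ := exists_path hx
  obtain ⟨q, hq⟩ := exists_path hy
  obtain ⟨r, hr⟩ := exists_path hz
  refine ⟨true :: p, ?_, true :: q, ?_, false :: r, ?_, ?_⟩
  · exact mem_pathsTo_node.mpr (Or.inr ⟨p, hp, rfl⟩)
  · exact mem_pathsTo_node.mpr (Or.inr ⟨q, hq, rfl⟩)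
  · exact mem_pathsTo_node.mpr (Or.inl ⟨r, hr, rfl⟩)
  · rw [lcp_cons, lcp_cons_ne (by simp) p r]
    exact ⟨List.nil_prefix, by simp⟩

lemma sides_of_consistent {L R : PTree α} {x y z : α} (h : (node L R).Consistent x y z) :
    (x ∈ L.leafList ∧ y ∈ L.leafList) ∨ (x ∈ R.leafList ∧ y ∈ R.leafList) := by
  obtain ⟨p, hp, q, hq, r, hr, hd⟩ := h
  have hne : lcp p q ≠ [] := by
    intro h0
    rw [h0] at hd
    exact hd.2 (List.prefix_nil.mp hd.1)
  obtain ⟨b, p', q', rfl, rfl⟩ := head_eq_of_lcp_ne_nil hne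
  rw [mem_pathsTo_node] at hp hq
  rcases hp with ⟨p₀, hp₀, hpe⟩ | ⟨p₀, hp₀, hpe⟩ <;>
    rcases hq with ⟨q₀, hq₀, hqe⟩ | ⟨q₀, hq₀, hqe⟩ <;>
      injection hpe with hb1 hp1 <;> injection hqe with hb2 hq2
  · exact Or.inl ⟨mem_leafList_of_mem_pathsTo (hp1 ▸ hp₀),
      mem_leafList_of_mem_pathsTo (hq2 ▸ hq₀)⟩
  · exact absurd (hb1.symm.trans hb2) (by simp)
  · exact absurd (hb1.symm.trans hb2) (by simp)
  · exact Or.inr ⟨mem_leafList_of_mem_pathsTo (hp1 ▸ hp₀),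
      mem_leafList_of_mem_pathsTo (hq2 ▸ hq₀)⟩

lemma sides_of_scon {L R : PTree α} {x y z : α} (h : SCon (node L R) x y z) :
    (x ∈ L.leafList ∧ y ∈ L.leafList) ∨ (x ∈ R.leafList ∧ y ∈ R.leafList) := by
  rcases h with h | h
  · exact sides_of_consistent h
  · rcases sides_of_consistent h with ⟨h1, h2⟩ | ⟨h1, h2⟩
    exacts [Or.inl ⟨h2, h1⟩, Or.inr ⟨h2, h1⟩]

lemma eq_leaf_of_leafList {T : PTree α} {a : α} (h : T.leafList = [a]) : T = .leaf a := by
  cases T with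
  | leaf b => simp [leafList] at h; rw [h]
  | node l r =>
    exfalso
    have h1 := List.length_pos_iff.mpr (leafList_ne_nil l)
    have h2 := List.length_pos_iff.mpr (leafList_ne_nil r)
    have h3 : l.leafList.length + r.leafList.length = 1 := by
      simpa [leafList] using congrArg List.length h
    omega

theorem iso_of_perm_rset (T₁ : PTree α) :
    ∀ T₂ : PTree α, T₁.distinctLeaves → T₂.distinctLeaves →
      T₁.leafList.Perm T₂.leafList → T₁.Rset = T₂.Rset → Iso T₁ T₂ := by
  induction T₁ with
  | leaf a =>
    intro T₂ _ _ hP _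
    have h : T₂.leafList = [a] := List.perm_singleton.mp hP.symm
    rw [eq_leaf_of_leafList h]
    exact Iso.leaf a
  | node L₁ R₁ ihL ihR =>
    intro T₂ h1 h2 hP hR
    cases T₂ with
    | leaf b =>
      exfalso
      have hlen := hP.length_eq
      have hl1 := List.length_pos_iff.mpr (leafList_ne_nil L₁)
      have hl2 := List.length_pos_iff.mpr (leafList_ne_nil R₁)
      simp only [leafList, List.length_append, List.length_cons, List.length_nil] at hlen
      omega
    | node L₂ R₂ =>
      simp only [distinctLeaves, leafList, List.nodup_append'] at h1 h2
      obtain ⟨nA₁, nB₁, d₁⟩ := h1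
      obtain ⟨nA₂, nB₂, d₂⟩ := h2
      have hSC : ∀ x y z, SCon (.node L₁ R₁) x y z ↔ SCon (.node L₂ R₂) x y z :=
        fun x y z => by rw [← mem_Rset, ← mem_Rset, hR]
      have hP' : (L₁.leafList ++ R₁.leafList).Perm (L₂.leafList ++ R₂.leafList) := hP
      have hMem : ∀ a : α, (a ∈ L₁.leafList ∨ a ∈ R₁.leafList) ↔
          (a ∈ L₂.leafList ∨ a ∈ R₂.leafList) := by
        intro a
        simpa [List.mem_append] using hP'.mem_iff (a := a)
      have hSide : ∀ x y : α,
          (x ∈ L₁.leafList ∧ y ∈ L₁.leafList ∨ x ∈ R₁.leafList ∧ y ∈ R₁.leafList) →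
          (x ∈ L₂.leafList ∧ y ∈ L₂.leafList ∨ x ∈ R₂.leafList ∧ y ∈ R₂.leafList) := by
        rintro x y (⟨hx, hy⟩ | ⟨hx, hy⟩)
        · obtain ⟨z, hz⟩ := List.exists_mem_of_ne_nil _ (leafList_ne_nil R₁)
          exact sides_of_scon ((hSC x y z).mp (Or.inl (consistent_split hx hy hz)))
        · obtain ⟨z, hz⟩ := List.exists_mem_of_ne_nil _ (leafList_ne_nil L₁)
          exact sides_of_scon ((hSC x y z).mp (Or.inl (consistent_split' hx hy hz)))
      have hSide' : ∀ x y : α,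
          (x ∈ L₂.leafList ∧ y ∈ L₂.leafList ∨ x ∈ R₂.leafList ∧ y ∈ R₂.leafList) →
          (x ∈ L₁.leafList ∧ y ∈ L₁.leafList ∨ x ∈ R₁.leafList ∧ y ∈ R₁.leafList) := by
        rintro x y (⟨hx, hy⟩ | ⟨hx, hy⟩)
        · obtain ⟨z, hz⟩ := List.exists_mem_of_ne_nil _ (leafList_ne_nil R₂)
          exact sides_of_scon ((hSC x y z).mpr (Or.inl (consistent_split hx hy hz)))
        · obtain ⟨z, hz⟩ := List.exists_mem_of_ne_nil _ (leafList_ne_nil L₂)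
          exact sides_of_scon ((hSC x y z).mpr (Or.inl (consistent_split' hx hy hz)))
      obtain ⟨x₀, hx₀⟩ := List.exists_mem_of_ne_nil _ (leafList_ne_nil L₁)
      rcases (hMem x₀).mp (Or.inl hx₀) with hx₀2 | hx₀2
      · -- L₁ ↔ L₂, R₁ ↔ R₂
        have hAA : ∀ y, y ∈ L₁.leafList ↔ y ∈ L₂.leafList := by
          intro y
          constructor
          · intro hy
            rcases hSide x₀ y (Or.inl ⟨hx₀, hy⟩) with ⟨_, h⟩ | ⟨h, _⟩
            · exact h
            · exact absurd h (fun h' => d₂ hx₀2 h')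
          · intro hy
            rcases hSide' x₀ y (Or.inl ⟨hx₀2, hy⟩) with ⟨_, h⟩ | ⟨h, _⟩
            · exact h
            · exact absurd h (fun h' => d₁ hx₀ h')
        have permA : L₁.leafList.Perm L₂.leafList :=
          (List.perm_ext_iff_of_nodup nA₁ nA₂).mpr hAA
        have permB : R₁.leafList.Perm R₂.leafList := by
          rw [List.perm_iff_count]
          intro a
          have hc1 := List.perm_iff_count.mp hP' a
          have hc2 := List.perm_iff_count.mp permA a
          simp only [List.count_append] at hc1
          omega
        have hBB : ∀ y, y ∈ R₁.leafList ↔ y ∈ R₂.leafList := fun y => permB.mem_iff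
        have hSCL : ∀ x y z, SCon L₁ x y z ↔ SCon L₂ x y z := by
          intro x y z
          by_cases hall : x ∈ L₁.leafList ∧ y ∈ L₁.leafList ∧ z ∈ L₁.leafList
          · obtain ⟨hx, hy, hz⟩ := hall
            exact ((scon_node_left (R := R₁) (fun h => d₁ hx h) (fun h => d₁ hy h)
                (fun h => d₁ hz h)).symm.trans ((hSC x y z).trans
              (scon_node_left (fun h => d₂ ((hAA x).mp hx) h) (fun h => d₂ ((hAA y).mp hy) h)
                (fun h => d₂ ((hAA z).mp hz) h))))
          · exact iff_of_false (fun h => hall (mem_of_scon h))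
              (fun h => hall (by
                obtain ⟨a, b, c⟩ := mem_of_scon h
                exact ⟨(hAA x).mpr a, (hAA y).mpr b, (hAA z).mpr c⟩))
        have hSCR : ∀ x y z, SCon R₁ x y z ↔ SCon R₂ x y z := by
          intro x y z
          by_cases hall : x ∈ R₁.leafList ∧ y ∈ R₁.leafList ∧ z ∈ R₁.leafList
          · obtain ⟨hx, hy, hz⟩ := hall
            exact ((scon_node_right (L := L₁) (fun h => d₁ h hx) (fun h => d₁ h hy)
                (fun h => d₁ h hz)).symm.trans ((hSC x y z).trans
              (scon_node_right (fun h => d₂ h ((hBB x).mp hx)) (fun h => d₂ h ((hBB y).mp hy))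
                (fun h => d₂ h ((hBB z).mp hz)))))
          · exact iff_of_false (fun h => hall (mem_of_scon h))
              (fun h => hall (by
                obtain ⟨a, b, c⟩ := mem_of_scon h
                exact ⟨(hBB x).mpr a, (hBB y).mpr b, (hBB z).mpr c⟩))
        exact Iso.node (ihL L₂ nA₁ nA₂ permA (rset_eq_of_scon hSCL))
          (ihR R₂ nB₁ nB₂ permB (rset_eq_of_scon hSCR))
      · -- L₁ ↔ R₂, R₁ ↔ L₂
        have hAB : ∀ y, y ∈ L₁.leafList ↔ y ∈ R₂.leafList := by
          intro y
          constructor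
          · intro hy
            rcases hSide x₀ y (Or.inl ⟨hx₀, hy⟩) with ⟨h, _⟩ | ⟨_, h⟩
            · exact absurd hx₀2 (fun h' => d₂ h h')
            · exact h
          · intro hy
            rcases hSide' x₀ y (Or.inr ⟨hx₀2, hy⟩) with ⟨_, h⟩ | ⟨h, _⟩
            · exact h
            · exact absurd h (fun h' => d₁ hx₀ h')
        have permA : L₁.leafList.Perm R₂.leafList :=
          (List.perm_ext_iff_of_nodup nA₁ nB₂).mpr hAB
        have permB : R₁.leafList.Perm L₂.leafList := by
          rw [List.perm_iff_count]
          intro a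
          have hc1 := List.perm_iff_count.mp hP' a
          have hc2 := List.perm_iff_count.mp permA a
          simp only [List.count_append] at hc1
          omega
        have hBA : ∀ y, y ∈ R₁.leafList ↔ y ∈ L₂.leafList := fun y => permB.mem_iff
        have hSCL : ∀ x y z, SCon L₁ x y z ↔ SCon R₂ x y z := by
          intro x y z
          by_cases hall : x ∈ L₁.leafList ∧ y ∈ L₁.leafList ∧ z ∈ L₁.leafList
          · obtain ⟨hx, hy, hz⟩ := hall
            exact ((scon_node_left (R := R₁) (fun h => d₁ hx h) (fun h => d₁ hy h)
                (fun h => d₁ hz h)).symm.trans ((hSC x y z).trans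
              (scon_node_right (fun h => d₂ h ((hAB x).mp hx)) (fun h => d₂ h ((hAB y).mp hy))
                (fun h => d₂ h ((hAB z).mp hz)))))
          · exact iff_of_false (fun h => hall (mem_of_scon h))
              (fun h => hall (by
                obtain ⟨a, b, c⟩ := mem_of_scon h
                exact ⟨(hAB x).mpr a, (hAB y).mpr b, (hAB z).mpr c⟩))
        have hSCR : ∀ x y z, SCon R₁ x y z ↔ SCon L₂ x y z := by
          intro x y z
          by_cases hall : x ∈ R₁.leafList ∧ y ∈ R₁.leafList ∧ z ∈ R₁.leafList
          · obtain ⟨hx, hy, hz⟩ := hall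
            exact ((scon_node_right (L := L₁) (fun h => d₁ h hx) (fun h => d₁ h hy)
                (fun h => d₁ h hz)).symm.trans ((hSC x y z).trans
              (scon_node_left (fun h => d₂ ((hBA x).mp hx) h) (fun h => d₂ ((hBA y).mp hy) h)
                (fun h => d₂ ((hBA z).mp hz) h))))
          · exact iff_of_false (fun h => hall (mem_of_scon h))
              (fun h => hall (by
                obtain ⟨a, b, c⟩ := mem_of_scon h
                exact ⟨(hBA x).mpr a, (hBA y).mpr b, (hBA z).mpr c⟩))
        exact Iso.swap (ihL R₂ nA₁ nB₂ permA (rset_eq_of_scon hSCL))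
          (ihR L₂ nB₁ nA₂ permB (rset_eq_of_scon hSCR))

end PTree

/-- Two rooted binary phylogenetic trees on the same leaf set of size `≥ 3` with equal
reflective triplet sets are isomorphic as leaf-labeled rooted trees. -/
theorem stmt3 {α : Type} [DecidableEq α] (T₁ T₂ : PTree α)
    (h1 : T₁.distinctLeaves) (h2 : T₂.distinctLeaves)
    (hS : T₁.leafList.Perm T₂.leafList) (h3 : 3 ≤ T₁.leafList.length)
    (hR : T₁.Rset = T₂.Rset) : Iso T₁ T₂ := by
  exact PTree.iso_of_perm_rset T₁ T₂ h1 h2 hS hR
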